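/- arXiv:1008.3947 — 8 statements merged into one kernel-verified Lean document; each statement's English description precedes it below -/
import Mathlib

section
/- Let W be a non-negative random variable with E W = 1, and let W^e be a random variable defined on the same probability space having the equilibrium distribution with respect to W. Then for any β > 0, the Kolmogorov distance between the law of W and the exponential distribution with mean 1 satisfies d_K(L(W), Exp(1)) ≤ 12β + 2 P(|W^e − W| > β). -/
/-!
Let `F` be the distribution function of `W` and `G(t) = ∫₀ᵗ (1 - F)`, which is the distribution
function of `Wᵉ` on `[0, ∞)`. Coupling `W` with `Wᵉ` and using that `G` is `1`-Lipschitz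
gives `|F - G| ≤ δ := β + P(|Wᵉ - W| > β)` on `[0, ∞)`. Since `G' = 1 - F` from the right, the
difference `D = G - (1 - e^{-t})` solves `D' = -D + (G - F)` with `D 0 = 0`, so comparing
`e^t D` with `δ (e^t - 1)` gives `|D| ≤ δ`. Hence `|F - (1 - e^{-t})| ≤ 2δ`.
-/

open MeasureTheory ProbabilityTheory

noncomputable def stdExpCDF (x : ℝ) : ℝ := if 0 ≤ x then 1 - Real.exp (-x) else 0

open Set Real

theorem abs_le_of_hasDerivWithinAt_neg_add {D e : ℝ → ℝ} {a b δ : ℝ} (hab : a ≤ b)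
    (hD : ContinuousOn D (Icc a b)) (hDa : D a = 0)
    (hD' : ∀ t ∈ Ico a b, HasDerivWithinAt D (-D t + e t) (Ici t) t)
    (he : ∀ t ∈ Ico a b, |e t| ≤ δ) : |D b| ≤ δ * (1 - exp (a - b)) := by
  have hH : ∀ t ∈ Ico a b,
      HasDerivWithinAt (fun s => exp s * D s) (exp t * e t) (Ici t) t := by
    intro t ht
    exact ((hasDerivAt_exp t).hasDerivWithinAt.mul (hD' t ht)).congr_deriv (by ring)
  have hbound := image_norm_le_of_norm_deriv_right_le_deriv_boundary
    (f := fun s => exp s * D s) (B := fun s => δ * (exp s - exp a))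
    (continuous_exp.continuousOn.mul hD) hH
    (by simp [hDa]) (fun s => ((hasDerivAt_exp s).sub_const _).const_mul δ)
    (fun t ht => by
      rw [norm_mul, norm_of_nonneg (exp_pos t).le, mul_comm δ]
      exact mul_le_mul_of_nonneg_left (he t ht) (exp_pos t).le)
    (right_mem_Icc.2 hab)
  rw [norm_mul, norm_of_nonneg (exp_pos b).le, norm_eq_abs] at hbound
  have hexp : exp b * (δ * (1 - exp (a - b))) = δ * (exp b - exp a) := by
    rw [mul_left_comm, mul_sub, mul_one, ← exp_add, add_sub_cancel]
  exact le_of_mul_le_mul_left (hexp ▸ hbound) (exp_pos b)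

namespace StieltjesFunction

variable (F : StieltjesFunction ℝ)

theorem antitone_one_sub : Antitone fun y => 1 - F y :=
  fun _ _ h => sub_le_sub_left (F.mono h) 1

theorem hasDerivWithinAt_integral_one_sub (a x : ℝ) :
    HasDerivWithinAt (fun t => ∫ y in a..t, (1 - F y)) (1 - F x) (Ici x) x :=
  intervalIntegral.integral_hasDerivWithinAt_right F.antitone_one_sub.intervalIntegrable
    F.antitone_one_sub.measurable.stronglyMeasurable.stronglyMeasurableAtFilter
    ((continuousWithinAt_const.sub (F.right_continuous x)).mono Ioi_subset_Ici_self)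

theorem abs_sub_one_sub_exp_le {δ x : ℝ} (hx : 0 ≤ x)
    (hF : ∀ t ∈ Icc 0 x, |F t - ∫ y in 0..t, (1 - F y)| ≤ δ) :
    |F x - (1 - exp (-x))| ≤ 2 * δ := by
  set G : ℝ → ℝ := fun t => ∫ y in 0..t, (1 - F y) with hG
  have hGcont : Continuous G :=
    intervalIntegral.continuous_primitive (fun _ _ => F.antitone_one_sub.intervalIntegrable) 0
  have hD' : ∀ t ∈ Ico 0 x, HasDerivWithinAt (fun t => G t - (1 - exp (-t)))
      (-(G t - (1 - exp (-t))) + (G t - F t)) (Ici t) t := fun t _ =>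
    ((F.hasDerivWithinAt_integral_one_sub 0 t).sub
      ((hasDerivAt_neg t).exp.const_sub 1).hasDerivWithinAt).congr_deriv (by ring)
  have hD := abs_le_of_hasDerivWithinAt_neg_add hx
    (hGcont.sub (continuous_const.sub (continuous_exp.comp continuous_neg))).continuousOn
    (by simp [hG]) hD' fun t ht => abs_sub_comm (F t) (G t) ▸ hF t (Ico_subset_Icc_self ht)
  have hδ : 0 ≤ δ := (abs_nonneg _).trans (hF 0 ⟨le_rfl, hx⟩)
  have hD_le : |G x - (1 - exp (-x))| ≤ δ :=
    hD.trans (mul_le_of_le_one_right hδ (by linarith [exp_pos (0 - x)]))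
  calc |F x - (1 - exp (-x))| ≤ |F x - G x| + |G x - (1 - exp (-x))| := abs_sub_le _ _ _
    _ ≤ δ + δ := add_le_add (hF x ⟨hx, le_rfl⟩) hD_le
    _ = 2 * δ := by ring

end StieltjesFunction

theorem abs_integral_one_sub_cdf_sub_le (ν : Measure ℝ) (c a b : ℝ) :
    |(∫ y in c..b, (1 - cdf ν y)) - ∫ y in c..a, (1 - cdf ν y)| ≤ |b - a| := by
  rw [intervalIntegral.integral_interval_sub_left (cdf ν).antitone_one_sub.intervalIntegrable
    (cdf ν).antitone_one_sub.intervalIntegrable]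
  have h := intervalIntegral.norm_integral_le_of_norm_le_const (a := a) (b := b) (C := 1)
    (f := fun y => 1 - cdf ν y) (fun y _ => by
      rw [norm_eq_abs, abs_le]
      constructor <;> linarith [cdf_nonneg ν y, cdf_le_one ν y])
  rwa [one_mul, norm_eq_abs] at h

section

variable {Ω : Type*} [MeasurableSpace Ω] (μ : Measure Ω)

theorem toReal_measure_le_le_add_toReal_measure_lt_abs_sub [IsFiniteMeasure μ] (X Y : Ω → ℝ)
    (β t : ℝ) :
    (μ {ω | X ω ≤ t}).toReal ≤
      (μ {ω | Y ω ≤ t + β}).toReal + (μ {ω | β < |Y ω - X ω|}).toReal := by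
  have hsub : {ω | X ω ≤ t} ⊆ {ω | Y ω ≤ t + β} ∪ {ω | β < |Y ω - X ω|} := by
    intro ω hω
    by_contra h
    simp only [mem_union, mem_ofPred_eq, not_or, not_le, not_lt] at h hω
    linarith [(abs_le.1 h.2).2]
  exact (measureReal_mono hsub).trans (measureReal_union_le _ _)

variable [IsProbabilityMeasure μ] {W : Ω → ℝ}

theorem cdf_map_eq_toReal (hW : Measurable W) (t : ℝ) :
    cdf (μ.map W) t = (μ {ω | W ω ≤ t}).toReal := by
  have := Measure.isProbabilityMeasure_map (μ := μ) hW.aemeasurable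
  rw [cdf_eq_real, map_measureReal_apply hW measurableSet_Iic]
  rfl

theorem toReal_measure_lt_eq_one_sub_cdf_map (hW : Measurable W) (t : ℝ) :
    (μ {ω | t < W ω}).toReal = 1 - cdf (μ.map W) t := by
  have hcompl : {ω | t < W ω} = {ω | W ω ≤ t}ᶜ := by
    ext ω
    simp
  rw [hcompl, cdf_map_eq_toReal μ hW]
  exact probReal_compl_eq_one_sub (measurableSet_le hW measurable_const)

theorem abs_cdf_map_sub_integral_le (hW : Measurable W) {We : Ω → ℝ}
    (hWe : ∀ t, 0 ≤ t → (μ {ω | We ω ≤ t}).toReal = ∫ y in 0..t, (1 - cdf (μ.map W) y))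
    {β t : ℝ} (hβ : 0 ≤ β) (ht : 0 ≤ t) :
    |cdf (μ.map W) t - ∫ y in 0..t, (1 - cdf (μ.map W) y)| ≤
      β + (μ {ω | β < |We ω - W ω|}).toReal := by
  set F := cdf (μ.map W)
  set G : ℝ → ℝ := fun t => ∫ y in 0..t, (1 - F y)
  set p := (μ {ω | β < |We ω - W ω|}).toReal
  have hG (a b : ℝ) : |G b - G a| ≤ |b - a| := abs_integral_one_sub_cdf_sub_le _ 0 a b
  have hF_le : F t ≤ G t + (β + p) :=
    calc F t = (μ {ω | W ω ≤ t}).toReal := cdf_map_eq_toReal μ hW t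
      _ ≤ (μ {ω | We ω ≤ t + β}).toReal + p :=
        toReal_measure_le_le_add_toReal_measure_lt_abs_sub μ W We β t
      _ = G (t + β) + p := by rw [hWe _ (by positivity)]
      _ ≤ G t + (β + p) := by
        have := (abs_le.1 (hG t (t + β))).2
        rw [add_sub_cancel_left, abs_of_nonneg hβ] at this
        linarith
  have hG_le : G t ≤ F t + (β + p) := by
    rcases le_or_gt β t with hβt | htβ
    · calc G t ≤ G (t - β) + β := by
            have := (abs_le.1 (hG (t - β) t)).2
            rw [sub_sub_cancel, abs_of_nonneg hβ] at this
            linarith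
        _ = (μ {ω | We ω ≤ t - β}).toReal + β := by rw [hWe _ (sub_nonneg.2 hβt)]
        _ ≤ (μ {ω | W ω ≤ t - β + β}).toReal + (μ {ω | β < |W ω - We ω|}).toReal + β := by
            gcongr
            exact toReal_measure_le_le_add_toReal_measure_lt_abs_sub μ We W β (t - β)
        _ = F t + (β + p) := by
            simp_rw [sub_add_cancel, abs_sub_comm (W _), ← cdf_map_eq_toReal μ hW]
            ring
    · have := (abs_le.1 (hG 0 t)).2
      rw [sub_zero, abs_of_nonneg ht] at this
      have hG0 : G 0 = 0 := intervalIntegral.integral_same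
      linarith [cdf_nonneg (μ.map W) t, show 0 ≤ p from ENNReal.toReal_nonneg]
  rw [abs_sub_le_iff]
  constructor <;> linarith

end

theorem kolmogorov_exponential_approx_general
    {Ω : Type*} [MeasurableSpace Ω] (μ : Measure Ω) [IsProbabilityMeasure μ]
    (W We : Ω → ℝ) (hWmeas : Measurable W)
    (hWnn : ∀ ω, 0 ≤ W ω)
    (hWe : ∀ x : ℝ, 0 ≤ x →
      (μ {ω | We ω ≤ x}).toReal = ∫ y in (0:ℝ)..x, (μ {ω | y < W ω}).toReal)
    (β : ℝ) (hβ : 0 < β) :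
    ∀ x : ℝ, |(μ {ω | W ω ≤ x}).toReal - stdExpCDF x| ≤
      12 * β + 2 * (μ {ω | β < |We ω - W ω|}).toReal := by
  intro x
  have hp : 0 ≤ (μ {ω | β < |We ω - W ω|}).toReal := ENNReal.toReal_nonneg
  rcases lt_or_ge x 0 with hx | hx
  · have hempty : {ω | W ω ≤ x} = ∅ :=
      eq_empty_of_forall_notMem fun ω hω => (hx.trans_le (hWnn ω)).not_ge hω
    rw [hempty, stdExpCDF, if_neg hx.not_ge, measure_empty, ENNReal.toReal_zero, sub_zero,
      abs_zero]
    positivity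
  · have hWe' (t : ℝ) (ht : 0 ≤ t) :
        (μ {ω | We ω ≤ t}).toReal = ∫ y in 0..t, (1 - cdf (μ.map W) y) := by
      simp_rw [hWe t ht, toReal_measure_lt_eq_one_sub_cdf_map μ hWmeas]
    have hclose := (cdf (μ.map W)).abs_sub_one_sub_exp_le hx fun t ht =>
      abs_cdf_map_sub_integral_le μ hWmeas hWe' hβ.le ht.1
    rw [← cdf_map_eq_toReal μ hWmeas, stdExpCDF, if_pos hx]
    linarith

/-- **Theorem 2.1 (Kolmogorov bound), Peköz–Röllin.**
If `W ≥ 0`, `E W = 1`, and `We` (on the same probability space) has the equilibrium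
distribution w.r.t. `W`, i.e. `P(We ≤ x) = ∫_0^x P(W > y) dy` for `x ≥ 0`, then for every
`β > 0` the Kolmogorov distance between `L(W)` and `Exp(1)` is at most
`12 β + 2 P(|We − W| > β)` (stated as the pointwise bound, equivalently the sup bound). -/
theorem kolmogorov_exponential_approx
    {Ω : Type*} [MeasurableSpace Ω] (μ : Measure Ω) [IsProbabilityMeasure μ]
    (W We : Ω → ℝ) (hWmeas : Measurable W) (hWemeas : Measurable We)
    (hWnn : ∀ ω, 0 ≤ W ω) (hWint : Integrable W μ)
    (hEW : ∫ ω, W ω ∂μ = 1)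
    (hWe : ∀ x : ℝ, 0 ≤ x →
      (μ {ω | We ω ≤ x}).toReal = ∫ y in (0:ℝ)..x, (μ {ω | y < W ω}).toReal)
    (β : ℝ) (hβ : 0 < β) :
    ∀ x : ℝ, |(μ {ω | W ω ≤ x}).toReal - stdExpCDF x| ≤
      12 * β + 2 * (μ {ω | β < |We ω - W ω|}).toReal :=
  kolmogorov_exponential_approx_general μ W We hWmeas hWnn hWe β hβ
end

section
/- Let X be a non-negative random variable with finite positive mean, and define the distribution function F^e(x) = (1/E X) ∫_0^x P(X > y) dy for x ≥ 0 and F^e(x) = 0 for x < 0. If X^e is a random variable with distribution function F^e, then for every Lipschitz-continuous function f one has E f(X) − f(0) = E X · E f'(X^e). -/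
/-!
Since a Lipschitz `f` is absolutely continuous, `f X - f 0 = ∫ t in 0..X, f' t`. Fubini on
`{(t, ω) | t < X ω}` turns the expectation of this into `∫ t in Ioi 0, P(X > t) * f' t`,
the integral of `f'` against the measure with density `t ↦ P(X > t)` on `(0, ∞)`. By the
layer-cake formula that measure has mass `E X`, and the hypothesis on the distribution function
of `Xe` says precisely that it is `E X` times the law of `Xe`.
-/

open MeasureTheory Filter Set
open scoped ENNReal

theorem LipschitzWith.integrable_comp {Ω E F : Type*} [MeasurableSpace Ω] {μ : Measure Ω}
    [IsFiniteMeasure μ] [NormedAddCommGroup E] [NormedAddCommGroup F] {K : NNReal} {f : E → F}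
    (hf : LipschitzWith K f) {Y : Ω → E} (hY : Integrable Y μ) :
    Integrable (fun ω => f (Y ω)) μ := by
  refine ((integrable_const ‖f 0‖).add (hY.norm.const_mul K)).mono'
    (hf.continuous.comp_aestronglyMeasurable hY.1) (ae_of_all _ fun ω => ?_)
  show ‖f (Y ω)‖ ≤ ‖f 0‖ + K * ‖Y ω‖
  have hlip := hf.norm_sub_le (Y ω) 0
  rw [sub_zero] at hlip
  linarith [norm_le_insert' (f (Y ω)) (f 0)]

namespace MeasureTheory

variable {Ω : Type*} [MeasurableSpace Ω] {μ : Measure Ω} {X : Ω → ℝ}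

/-- Normalised by `E X`, this is the equilibrium distribution of `X`. -/
noncomputable def tailMeasure (μ : Measure Ω) (X : Ω → ℝ) : Measure ℝ :=
  (volume.restrict (Ioi 0)).withDensity fun t => μ {ω | t < X ω}

theorem measurable_measure_lt : Measurable fun t : ℝ => μ {ω | t < X ω} :=
  Antitone.measurable fun _ _ hst => measure_mono fun _ hω => hst.trans_lt hω

theorem tailMeasure_univ (hX : 0 ≤ᵐ[μ] X) (hXm : AEMeasurable X μ) :
    tailMeasure μ X univ = ∫⁻ ω, ENNReal.ofReal (X ω) ∂μ := by
  rw [tailMeasure, withDensity_apply _ MeasurableSet.univ, Measure.restrict_univ,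
    lintegral_eq_lintegral_meas_lt μ hX hXm]

theorem isFiniteMeasure_tailMeasure (hX : 0 ≤ᵐ[μ] X) (hXint : Integrable X μ) :
    IsFiniteMeasure (tailMeasure μ X) :=
  ⟨by rw [tailMeasure_univ hX hXint.aemeasurable]; exact hXint.lintegral_lt_top⟩

theorem tailMeasure_Iic_of_neg {x : ℝ} (hx : x < 0) : tailMeasure μ X (Iic x) = 0 := by
  rw [tailMeasure, withDensity_apply _ measurableSet_Iic,
    Measure.restrict_restrict measurableSet_Iic, Iic_inter_Ioi, Ioc_eq_empty (not_lt.2 hx.le),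
    Measure.restrict_empty, lintegral_zero_measure]

theorem tailMeasure_Iic [IsFiniteMeasure μ] {x : ℝ} (hx : 0 ≤ x) :
    tailMeasure μ X (Iic x) = ENNReal.ofReal (∫ t in 0..x, μ.real {ω | t < X ω}) := by
  rw [tailMeasure, withDensity_apply _ measurableSet_Iic,
    Measure.restrict_restrict measurableSet_Iic, Iic_inter_Ioi,
    intervalIntegral.integral_of_le hx, ofReal_integral_eq_lintegral_ofReal]
  · refine setLIntegral_congr_fun measurableSet_Ioc fun t _ => ?_
    exact (ENNReal.ofReal_toReal (measure_ne_top μ _)).symm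
  · exact Measure.integrableOn_of_bounded measure_Ioc_lt_top.ne
      measurable_measure_lt.ennreal_toReal.aestronglyMeasurable
      (M := μ.real univ) (Eventually.of_forall fun t => by
        simpa [abs_of_nonneg measureReal_nonneg] using
          measureReal_mono (μ := μ) (subset_univ {ω | t < X ω}))
  · exact Eventually.of_forall fun _ => measureReal_nonneg

theorem integral_tailMeasure [IsFiniteMeasure μ] (g : ℝ → ℝ) :
    ∫ t, g t ∂tailMeasure μ X = ∫ t in Ioi 0, μ.real {ω | t < X ω} * g t :=
  integral_withDensity_eq_integral_toReal_smul measurable_measure_lt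
    (Eventually.of_forall fun _ => measure_lt_top μ _) g

theorem integral_intervalIntegral_eq_integral_measureReal_lt_mul [SigmaFinite μ]
    (hXm : Measurable X) (hX : ∀ ω, 0 ≤ X ω) (hXint : Integrable X μ)
    {g : ℝ → ℝ} (hg : Measurable g) {C : ℝ} (hgC : ∀ t, ‖g t‖ ≤ C) :
    ∫ ω, (∫ t in 0..X ω, g t) ∂μ = ∫ t in Ioi 0, μ.real {ω | t < X ω} * g t := by
  set S := {p : ℝ × Ω | p.1 < X p.2}
  have hS : MeasurableSet S := measurableSet_lt measurable_fst (hXm.comp measurable_snd)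
  have hS_ne_top : (volume.restrict (Ioi 0)).prod μ S ≠ ∞ := by
    rw [Measure.prod_apply hS]
    change ∫⁻ t in Ioi 0, μ {ω | t < X ω} ≠ ∞
    rw [← lintegral_eq_lintegral_meas_lt μ (ae_of_all _ hX) hXm.aemeasurable]
    exact hXint.lintegral_lt_top.ne
  have hint : Integrable (S.indicator fun p => g p.1) ((volume.restrict (Ioi 0)).prod μ) :=
    (Measure.integrableOn_of_bounded hS_ne_top (hg.comp measurable_fst).aestronglyMeasurable
      (ae_of_all _ fun p => hgC p.1)).integrable_indicator hS
  have hslice_t : ∀ t, ∫ ω, S.indicator (fun p => g p.1) (t, ω) ∂μ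
      = μ.real {ω | t < X ω} * g t := fun t =>
    integral_indicator_const (g t) (measurableSet_lt measurable_const hXm)
  have hslice_ω : ∀ ω, ∫ t in Ioi 0, S.indicator (fun p => g p.1) (t, ω)
      = ∫ t in 0..X ω, g t := fun ω => by
    rw [show (fun t => S.indicator (fun p => g p.1) (t, ω)) = (Iio (X ω)).indicator g from rfl,
      integral_indicator measurableSet_Iio, Measure.restrict_restrict measurableSet_Iio,
      Iio_inter_Ioi, ← integral_Ioc_eq_integral_Ioo, intervalIntegral.integral_of_le (hX ω)]
  simp only [← hslice_ω, ← hslice_t]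
  exact (integral_integral_swap
    (f := fun t ω => S.indicator (fun p => g p.1) (t, ω)) hint).symm

theorem tailMeasure_eq_smul_map [IsFiniteMeasure μ] {Xe : Ω → ℝ} (hXe_meas : Measurable Xe)
    (hX : 0 ≤ᵐ[μ] X) (hXint : Integrable X μ) (hEX : 0 < ∫ ω, X ω ∂μ)
    (hXe : ∀ x : ℝ, 0 ≤ x → μ.real {ω | Xe ω ≤ x}
        = (∫ t in (0:ℝ)..x, μ.real {ω | t < X ω}) / (∫ ω, X ω ∂μ))
    (hXe' : ∀ x : ℝ, x < 0 → μ {ω | Xe ω ≤ x} = 0) :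
    tailMeasure μ X = ENNReal.ofReal (∫ ω, X ω ∂μ) • μ.map Xe := by
  have := isFiniteMeasure_tailMeasure hX hXint
  refine Measure.ext_of_Iic _ _ fun x => ?_
  rw [Measure.smul_apply, Measure.map_apply hXe_meas measurableSet_Iic, smul_eq_mul,
    show Xe ⁻¹' Iic x = {ω | Xe ω ≤ x} from rfl]
  rcases lt_or_ge x 0 with hx | hx
  · rw [tailMeasure_Iic_of_neg hx, hXe' x hx, mul_zero]
  · rw [tailMeasure_Iic hx, ← ofReal_measureReal (measure_ne_top μ _), hXe x hx,
      ← ENNReal.ofReal_mul hEX.le, mul_div_cancel₀ _ hEX.ne']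

end MeasureTheory

open MeasureTheory

/-- **Characterization of the equilibrium distribution.**
Let `X ≥ 0` with `0 < E X < ∞` and let `Xe` have the equilibrium (stationary renewal)
distribution w.r.t. `X`, i.e. `P(Xe ≤ x) = (1/E X) ∫_0^x P(X > y) dy` for `x ≥ 0` and
`P(Xe ≤ x) = 0` for `x < 0`. Then for every Lipschitz-continuous `f : ℝ → ℝ`,
`E f(X) − f(0) = E X · E f'(Xe)` (with `f'` the a.e.-defined derivative `deriv f`). -/
theorem equilibrium_characterization
    {Ω : Type*} [MeasurableSpace Ω] (μ : Measure Ω) [IsProbabilityMeasure μ]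
    (X Xe : Ω → ℝ) (hXmeas : Measurable X) (hXemeas : Measurable Xe)
    (hXnn : ∀ ω, 0 ≤ X ω) (hXint : Integrable X μ)
    (hEX : 0 < ∫ ω, X ω ∂μ)
    (hXe : ∀ x : ℝ, 0 ≤ x → (μ {ω | Xe ω ≤ x}).toReal
        = (∫ y in (0:ℝ)..x, (μ {ω | y < X ω}).toReal) / (∫ ω, X ω ∂μ))
    (hXe' : ∀ x : ℝ, x < 0 → μ {ω | Xe ω ≤ x} = 0) :
    ∀ (K : NNReal) (f : ℝ → ℝ), LipschitzWith K f →
      (∫ ω, f (X ω) ∂μ) - f 0 = (∫ ω, X ω ∂μ) * ∫ ω, deriv f (Xe ω) ∂μ := by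
  intro K f hf
  have hFTC : ∀ ω, ∫ t in 0..X ω, deriv f t = f (X ω) - f 0 := fun ω =>
    hf.lipschitzOnWith.absolutelyContinuousOnInterval.integral_deriv_eq_sub
  calc (∫ ω, f (X ω) ∂μ) - f 0 = ∫ ω, (∫ t in 0..X ω, deriv f t) ∂μ := by
        rw [integral_congr_ae (ae_of_all _ hFTC),
          integral_sub (hf.integrable_comp hXint) (integrable_const _), integral_const]
        simp
    _ = ∫ t, deriv f t ∂tailMeasure μ X := by
        rw [integral_tailMeasure, integral_intervalIntegral_eq_integral_measureReal_lt_mul hXmeas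
          hXnn hXint (measurable_deriv f) fun t => norm_deriv_le_of_lipschitz hf]
    _ = (∫ ω, X ω ∂μ) * ∫ ω, deriv f (Xe ω) ∂μ := by
        rw [tailMeasure_eq_smul_map hXemeas (ae_of_all _ hXnn) hXint hEX hXe hXe',
          integral_smul_measure, integral_map hXemeas.aemeasurable
            (measurable_deriv f).aestronglyMeasurable, ENNReal.toReal_ofReal hEX.le, smul_eq_mul]
end

section
/- For any integer n ≥ 1 and any real m > 1, the quantity η(m,n) = (1−m)/(2(1−m^n)) + ((1−m)^2/(m(1−m^n))) · Σ_{j=1}^n m^{2j}/(1−m^j) satisfies η(m,n) ≤ 6(m−1) + (6.5 + log n)/n. -/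
/-!
Flip the signs so that only `Pⱼ = mʲ - 1 > 0` appears, and expand `m²ʲ/Pⱼ = mʲ + 1 + 1/Pⱼ`.
Bernoulli's inequality `j (m - 1) ≤ Pⱼ` turns `1/Pⱼ` into `1/(j (m - 1))`, the geometric part
sums to `m Pₙ/(m - 1)`, and the harmonic sum is at most `1 + log n`. The same inequality
`(m - 1)/Pₙ ≤ 1/n` then bounds every remaining prefactor, giving
`η(m,n) ≤ 2 (m - 1) + (3/2 + log n)/n`.
-/

open Finset Real

lemma sq_div_sub_one_eq {K : Type*} [Field K] {x : K} (hx : x ≠ 1) :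
    x ^ 2 / (x - 1) = x + 1 + 1 / (x - 1) := by
  have : x - 1 ≠ 0 := sub_ne_zero.mpr hx
  field_simp
  ring

lemma sum_Icc_inv_le_one_add_log (n : ℕ) : ∑ j ∈ Icc 1 n, (j : ℝ)⁻¹ ≤ 1 + log n := by
  simpa only [harmonic_eq_sum_Icc, Rat.cast_sum, Rat.cast_inv, Rat.cast_natCast]
    using harmonic_le_one_add_log n

section

variable {m : ℝ}

lemma sub_one_mul_sum_Icc_pow (n : ℕ) : (m - 1) * ∑ j ∈ Icc 1 n, m ^ j = m * (m ^ n - 1) := by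
  rw [mul_comm, ← Ico_add_one_right_eq_Icc, geom_sum_Ico_mul m (by omega)]
  ring

lemma sub_one_div_pow_sub_one_le_inv (hm : 1 < m) {n : ℕ} (hn : n ≠ 0) :
    (m - 1) / (m ^ n - 1) ≤ (n : ℝ)⁻¹ := by
  have hP : 0 < m ^ n - 1 := sub_pos.mpr (one_lt_pow₀ hm hn)
  have bernoulli : 1 + n * (m - 1) ≤ m ^ n := one_add_mul_sub_le_pow (by linarith) n
  rw [div_le_iff₀ hP, inv_mul_eq_div, le_div_iff₀ (by positivity)]
  linarith

lemma sub_one_mul_sum_sq_pow_div_le (hm : 1 < m) (n : ℕ) :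
    (m - 1) * ∑ j ∈ Icc 1 n, m ^ (2 * j) / (m ^ j - 1)
      ≤ m * (m ^ n - 1) + n * (m - 1) + ∑ j ∈ Icc 1 n, (j : ℝ)⁻¹ := by
  have hterm : ∀ j ∈ Icc 1 n, (m - 1) * (m ^ (2 * j) / (m ^ j - 1))
      ≤ (m - 1) * m ^ j + (m - 1) + (j : ℝ)⁻¹ := by
    intro j hj
    have hj0 : j ≠ 0 := Nat.one_le_iff_ne_zero.mp (mem_Icc.mp hj).1
    rw [pow_mul', sq_div_sub_one_eq (one_lt_pow₀ hm hj0).ne', mul_add, mul_add, mul_one,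
      mul_one_div]
    gcongr
    exact sub_one_div_pow_sub_one_le_inv hm hj0
  calc (m - 1) * ∑ j ∈ Icc 1 n, m ^ (2 * j) / (m ^ j - 1)
      ≤ ∑ j ∈ Icc 1 n, ((m - 1) * m ^ j + (m - 1) + (j : ℝ)⁻¹) := by
        rw [mul_sum]; exact sum_le_sum hterm
    _ = m * (m ^ n - 1) + n * (m - 1) + ∑ j ∈ Icc 1 n, (j : ℝ)⁻¹ := by
        rw [sum_add_distrib, sum_add_distrib, ← mul_sum, sub_one_mul_sum_Icc_pow, sum_const,
          Nat.card_Icc, nsmul_eq_mul]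
        simp

lemma sq_sub_one_div_mul_sum_sq_pow_div_le (hm : 1 < m) {n : ℕ} (hn : n ≠ 0) :
    (m - 1) ^ 2 / (m * (m ^ n - 1)) * ∑ j ∈ Icc 1 n, m ^ (2 * j) / (m ^ j - 1)
      ≤ 2 * (m - 1) + (∑ j ∈ Icc 1 n, (j : ℝ)⁻¹) / n := by
  set S := ∑ j ∈ Icc 1 n, m ^ (2 * j) / (m ^ j - 1)
  set H := ∑ j ∈ Icc 1 n, (j : ℝ)⁻¹
  have hP : 0 < m ^ n - 1 := sub_pos.mpr (one_lt_pow₀ hm hn)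
  calc (m - 1) ^ 2 / (m * (m ^ n - 1)) * S
      = (m - 1) / (m ^ n - 1) / m * ((m - 1) * S) := by field_simp
    _ ≤ (m - 1) / (m ^ n - 1) / m * (m * (m ^ n - 1) + n * (m - 1) + H) := by
        gcongr; exact sub_one_mul_sum_sq_pow_div_le hm n
    _ = (m - 1) + (m - 1) / (m ^ n - 1) * (n * (m - 1) + H) / m := by field_simp; ring
    _ ≤ (m - 1) + (m - 1) / (m ^ n - 1) * (n * (m - 1) + H) := by
        gcongr; exact div_le_self (by positivity) hm.le
    _ ≤ (m - 1) + (n : ℝ)⁻¹ * (n * (m - 1) + H) := by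
        gcongr; exact sub_one_div_pow_sub_one_le_inv hm hn
    _ = 2 * (m - 1) + H / n := by field_simp; ring

end

/-- **Bound (5) on η(m,n) for m > 1, Peköz–Röllin.**
For any integer `n ≥ 1` and real `m > 1`,
`η(m,n) = (1−m)/(2(1−mⁿ)) + ((1−m)²/(m(1−mⁿ))) ∑_{j=1}^n m^{2j}/(1−m^j)`
satisfies `η(m,n) ≤ 6(m−1) + (6.5 + log n)/n`. -/
theorem eta_bound_supercritical (n : ℕ) (hn : 1 ≤ n) (m : ℝ) (hm : 1 < m) :
    (1 - m) / (2 * (1 - m ^ n))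
        + (1 - m) ^ 2 / (m * (1 - m ^ n))
          * ∑ j ∈ Finset.Icc 1 n, m ^ (2 * j) / (1 - m ^ j)
      ≤ 6 * (m - 1) + (6.5 + Real.log n) / n := by
  have hn0 : n ≠ 0 := by omega
  simp only [← neg_sub _ (1 : ℝ), neg_sq, mul_neg, div_neg, sum_neg_distrib, neg_div, neg_mul,
    neg_neg]
  have hfirst : (m - 1) / (2 * (m ^ n - 1)) ≤ (n : ℝ)⁻¹ / 2 := by
    rw [mul_comm, ← div_div]
    gcongr
    exact sub_one_div_pow_sub_one_le_inv hm hn0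
  calc (m - 1) / (2 * (m ^ n - 1))
        + (m - 1) ^ 2 / (m * (m ^ n - 1)) * ∑ j ∈ Icc 1 n, m ^ (2 * j) / (m ^ j - 1)
      ≤ (n : ℝ)⁻¹ / 2 + (2 * (m - 1) + (1 + log n) / n) := by
        gcongr
        exact (sq_sub_one_div_mul_sum_sq_pow_div_le hm hn0).trans
          (by gcongr; exact sum_Icc_inv_le_one_add_log n)
    _ = 2 * (m - 1) + (3 / 2 + log n) / n := by ring
    _ ≤ 6 * (m - 1) + (6.5 + log n) / n := by
        gcongr
        · linarith
        · norm_num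
end

section
/- For any integer n ≥ 2 and any real m with 1/2 ≤ m < 1, the quantity η(m,n) = (1−m)/(2(1−m^n)) + ((1−m)^2/(m(1−m^n))) · Σ_{j=1}^n m^{2j}/(1−m^j) satisfies η(m,n) ≤ (4.5 − log(1−m))(1−m) + (4.5 + log n)/n. -/
/-!
Bounding `1 - m ^ j ≥ j (1 - m) m ^ j / m` (from the geometric sum) termwise turns `η(m,n)` into at
most `(1 - m) / (1 - m ^ n) · (1/2 + S)` with `S = ∑_{j=1}^n m^j / j`, and the same inequality
for `j = n` gives `(1 - m) / (1 - m ^ n) ≤ (1 - m) + 1/n`. The partial sum `S` is at most both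
`-log (1 - m)` (a truncation of its power series) and the harmonic number `H_n ≤ 1 + log n`.
-/

open Finset Real

lemma nat_mul_one_sub_mul_pow_le {m : ℝ} (hm0 : 0 ≤ m) (hm1 : m ≤ 1) (j : ℕ) :
    j * (1 - m) * m ^ j ≤ m * (1 - m ^ j) := by
  have hgeom : (1 - m) * ∑ i ∈ range j, m ^ i = 1 - m ^ j := by
    linarith [geom_sum_mul m j]
  have hterm : (j : ℝ) * m ^ j ≤ ∑ i ∈ range j, m * m ^ i := by
    calc (j : ℝ) * m ^ j = ∑ _i ∈ range j, m ^ j := by simp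
      _ ≤ ∑ i ∈ range j, m * m ^ i := by
        refine sum_le_sum fun i hi => ?_
        rw [← pow_succ']
        exact pow_le_pow_of_le_one hm0 hm1 (mem_range.mp hi)
  calc j * (1 - m) * m ^ j = (1 - m) * (j * m ^ j) := by ring
    _ ≤ (1 - m) * ∑ i ∈ range j, m * m ^ i := by gcongr
    _ = m * (1 - m ^ j) := by rw [← mul_sum, ← hgeom]; ring

lemma one_sub_div_mul_pow_two_mul_div_le {m : ℝ} (hm0 : 0 < m) (hm1 : m < 1) {j : ℕ}
    (hj : 0 < j) : (1 - m) / m * (m ^ (2 * j) / (1 - m ^ j)) ≤ m ^ j / j := by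
  have hpow : 0 < 1 - m ^ j := sub_pos.mpr (pow_lt_one₀ hm0.le hm1 hj.ne')
  have hj' : (0 : ℝ) < j := by exact_mod_cast hj
  have key := nat_mul_one_sub_mul_pow_le hm0.le hm1.le j
  rw [div_mul_div_comm, div_le_div_iff₀ (by positivity) hj', pow_mul']
  have hmj : 0 ≤ m ^ j := by positivity
  nlinarith

lemma one_sub_div_one_sub_pow_le {m : ℝ} (hm0 : 0 ≤ m) (hm1 : m < 1) {n : ℕ} (hn : 0 < n) :
    (1 - m) / (1 - m ^ n) ≤ (1 - m) + 1 / n := by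
  have hpow : 0 < 1 - m ^ n := sub_pos.mpr (pow_lt_one₀ hm0 hm1 hn.ne')
  have hn' : (0 : ℝ) < n := by exact_mod_cast hn
  have key := nat_mul_one_sub_mul_pow_le hm0 hm1.le n
  have hcorr : (1 - m) * m ^ n ≤ (1 - m ^ n) / n := by
    rw [le_div_iff₀ hn']
    nlinarith
  rw [div_le_iff₀ hpow]
  linear_combination hcorr

lemma sum_Icc_pow_div_le_neg_log {m : ℝ} (hm0 : 0 ≤ m) (hm1 : m < 1) (n : ℕ) :
    ∑ j ∈ Icc 1 n, m ^ j / j ≤ -log (1 - m) := by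
  have hseries := hasSum_pow_div_log_of_abs_lt_one (abs_lt.mpr ⟨by linarith, hm1⟩)
  calc ∑ j ∈ Icc 1 n, m ^ j / j = ∑ i ∈ range n, m ^ (i + 1) / (i + 1) := by
        rw [← Ico_add_one_right_eq_Icc, sum_Ico_eq_sum_range]
        simp [add_comm]
    _ ≤ -log (1 - m) := sum_le_hasSum (range n) (fun i _ => by positivity) hseries

lemma sum_Icc_pow_div_le_one_add_log {m : ℝ} (hm0 : 0 ≤ m) (hm1 : m ≤ 1) (n : ℕ) :
    ∑ j ∈ Icc 1 n, m ^ j / j ≤ 1 + log n := by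
  refine le_trans ?_ (harmonic_le_one_add_log n)
  rw [harmonic_eq_sum_Icc]
  push_cast
  refine sum_le_sum fun j _ => ?_
  rw [div_eq_mul_inv]
  exact mul_le_of_le_one_left (by positivity) (pow_le_one₀ hm0 hm1)

lemma eta_le_mul_half_add_sum {m : ℝ} (hm0 : 0 < m) (hm1 : m < 1) (n : ℕ) :
    (1 - m) / (2 * (1 - m ^ n))
        + (1 - m) ^ 2 / (m * (1 - m ^ n)) * ∑ j ∈ Icc 1 n, m ^ (2 * j) / (1 - m ^ j)
      ≤ (1 - m) / (1 - m ^ n) * (1 / 2 + ∑ j ∈ Icc 1 n, m ^ j / j) := by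
  calc _ = (1 - m) / (1 - m ^ n) * (1 / 2
          + ∑ j ∈ Icc 1 n, (1 - m) / m * (m ^ (2 * j) / (1 - m ^ j))) := by
        rw [← mul_sum]; field_simp
    _ ≤ _ := by
        gcongr with j hj
        · exact div_nonneg (by linarith) (sub_nonneg.mpr (pow_le_one₀ hm0.le hm1.le))
        · exact one_sub_div_mul_pow_two_mul_div_le hm0 hm1 (mem_Icc.mp hj).1

/-- **Bound (6) on η(m,n) for 1/2 ≤ m < 1, Peköz–Röllin.**
For any integer `n ≥ 2` and real `m` with `1/2 ≤ m < 1`,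
`η(m,n) = (1−m)/(2(1−mⁿ)) + ((1−m)²/(m(1−mⁿ))) ∑_{j=1}^n m^{2j}/(1−m^j)`
satisfies `η(m,n) ≤ (4.5 − log(1−m))(1−m) + (4.5 + log n)/n`. -/
theorem eta_bound_subcritical (n : ℕ) (hn : 2 ≤ n) (m : ℝ)
    (hm₁ : 1 / 2 ≤ m) (hm₂ : m < 1) :
    (1 - m) / (2 * (1 - m ^ n))
        + (1 - m) ^ 2 / (m * (1 - m ^ n))
          * ∑ j ∈ Finset.Icc 1 n, m ^ (2 * j) / (1 - m ^ j)
      ≤ (4.5 - Real.log (1 - m)) * (1 - m) + (4.5 + Real.log n) / n := by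
  have hm0 : 0 < m := by linarith
  have hn0 : 0 < n := by omega
  set S := ∑ j ∈ Icc 1 n, m ^ j / j
  have hS_log : S ≤ -log (1 - m) := sum_Icc_pow_div_le_neg_log hm0.le hm₂ n
  have hS_harm : S ≤ 1 + log n := sum_Icc_pow_div_le_one_add_log hm0.le hm₂.le n
  calc _ ≤ (1 - m) / (1 - m ^ n) * (1 / 2 + S) := eta_le_mul_half_add_sum hm0 hm₂ n
    _ ≤ ((1 - m) + 1 / n) * (1 / 2 + S) := by
        gcongr
        exact one_sub_div_one_sub_pow_le hm0.le hm₂ hn0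
    _ = (1 / 2 + S) * (1 - m) + (1 / 2 + S) / n := by ring
    _ ≤ _ := by
        gcongr ?_ * _ + ?_ / _ <;> linarith
end

section
/- Let a, b and c be real numbers each greater than 1 such that 1/a ≤ 1/b + 1/c ≤ 1. Then log(a)/a ≤ (1 + log b)/b + (1 + log c)/c. -/
open Real Set

/-! With `x = 1/a`, `u = 1/b`, `v = 1/c` and `η(t) = -t log t`, the claim reads
`η x ≤ (u + η u) + (v + η v)`. Now `η x ≤ x + η x`, the map `t ↦ t + η t` is monotone on `[0, 1]`
(its derivative is `-log t`), and `η` is subadditive, so with `x ≤ u + v ≤ 1` the right side is at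
least `(u + v) + η (u + v) ≥ x + η x`. -/

namespace Real

lemma negMulLog_inv (x : ℝ) : negMulLog x⁻¹ = log x / x := by
  rw [negMulLog, log_inv]
  ring

lemma negMulLog_add_le {u v : ℝ} (hu : 0 ≤ u) (hv : 0 ≤ v) :
    negMulLog (u + v) ≤ negMulLog u + negMulLog v := by
  have mul_log_le (t : ℝ) (ht : 0 ≤ t) (hts : t ≤ u + v) : t * log t ≤ t * log (u + v) := by
    rcases ht.eq_or_lt with rfl | ht
    · simp
    · exact mul_le_mul_of_nonneg_left (log_le_log ht hts) ht.le
  simp only [negMulLog, neg_mul, add_mul]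
  linarith [mul_log_le u hu (by linarith), mul_log_le v hv (by linarith)]

lemma monotoneOn_add_negMulLog : MonotoneOn (fun t ↦ t + negMulLog t) (Icc 0 1) := by
  refine monotoneOn_of_deriv_nonneg (convex_Icc 0 1) (by fun_prop) ?_ ?_ <;>
    rw [interior_Icc]
  · intro t ht
    exact (differentiableAt_id.add
      (differentiableAt_negMulLog_iff.2 ht.1.ne')).differentiableWithinAt
  · intro t ht
    have hderiv : HasDerivAt (fun t ↦ t + negMulLog t) (1 + (-log t - 1)) t :=
      (hasDerivAt_id t).add (hasDerivAt_negMulLog ht.1.ne')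
    rw [hderiv.deriv]
    linarith [log_nonpos ht.1.le ht.2.le]

end Real

/-- **Lemma 3.3, Peköz–Röllin.**
If `a, b, c > 1` and `1/a ≤ 1/b + 1/c ≤ 1`, then
`log(a)/a ≤ (1 + log b)/b + (1 + log c)/c`. -/
theorem log_div_le_of_inv_le (a b c : ℝ) (ha : 1 < a) (hb : 1 < b) (hc : 1 < c)
    (h₁ : 1 / a ≤ 1 / b + 1 / c) (h₂ : 1 / b + 1 / c ≤ 1) :
    Real.log a / a ≤ (1 + Real.log b) / b + (1 + Real.log c) / c := by
  simp only [one_div] at h₁ h₂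
  have ha' : 0 ≤ a⁻¹ := inv_nonneg.2 (by linarith)
  have hb' : 0 ≤ b⁻¹ := inv_nonneg.2 (by linarith)
  have hc' : 0 ≤ c⁻¹ := inv_nonneg.2 (by linarith)
  have hmono : a⁻¹ + negMulLog a⁻¹ ≤ (b⁻¹ + c⁻¹) + negMulLog (b⁻¹ + c⁻¹) :=
    monotoneOn_add_negMulLog ⟨ha', h₁.trans h₂⟩ ⟨by positivity, h₂⟩ h₁
  have hsubadd := negMulLog_add_le hb' hc'
  simp only [negMulLog_inv] at hmono hsubadd
  calc log a / a ≤ a⁻¹ + log a / a := by linarith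
    _ ≤ (b⁻¹ + c⁻¹) + (log b / b + log c / c) := by linarith
    _ = (1 + log b) / b + (1 + log c) / c := by ring
end

section
/- For any real m > 1 and integer n ≥ 1, Σ_{j=1}^n m^{2j}/(m^j − 1) ≤ m^2/(m−1) + 2 m^{2n}/(m^n − 1) + (m^n − m + log((m^n − 1)/(m − 1)))/log(m). -/
/-!
Write `m^{2j}/(m^j - 1) = m^j + m^j/(m^j - 1)`. The two summands are the values at integers of
the derivatives of `m^x / log m` and `log (m^x - 1) / log m`. As the first is increasing and the
second decreasing, each term is at most the increment of its antiderivative over the unit interval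
to its right, respectively left (both instances of `log x ≤ x - 1`), so the sums telescope: a
discrete form of comparing the sum with `∫_1^n m^{2x}/(m^x - 1) dx`. The leftover endpoint terms `m^n` and `m/(m - 1)` are
absorbed by `2 m^{2n}/(m^n - 1)` and `m^2/(m - 1)`.
-/
open Finset Real

theorem sum_Ico_le_sub_of_le_sub {M : Type*} [AddCommGroup M] [PartialOrder M]
    [IsOrderedAddMonoid M] {a g : ℕ → M} {k n : ℕ} (hkn : k ≤ n)
    (h : ∀ j ∈ Ico k n, a j ≤ g (j + 1) - g j) : ∑ j ∈ Ico k n, a j ≤ g n - g k :=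
  (sum_le_sum h).trans_eq (sum_Ico_sub g hkn)

section

variable {m : ℝ} (hm : 1 < m)
include hm

theorem pow_mul_log_le_pow_succ_sub_pow (j : ℕ) : m ^ j * log m ≤ m ^ (j + 1) - m ^ j := by
  have hlog : log m ≤ m - 1 := log_le_sub_one_of_pos (by linarith)
  calc m ^ j * log m ≤ m ^ j * (m - 1) := by gcongr
    _ = m ^ (j + 1) - m ^ j := by ring

theorem sum_Ico_pow_le {k n : ℕ} (hkn : k ≤ n) :
    ∑ j ∈ Ico k n, m ^ j ≤ (m ^ n - m ^ k) / log m := by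
  have hlog : 0 < log m := log_pos hm
  rw [sub_div]
  refine sum_Ico_le_sub_of_le_sub (g := fun j ↦ m ^ j / log m) hkn fun j _ ↦ ?_
  rw [← sub_div, le_div_iff₀ hlog]
  exact pow_mul_log_le_pow_succ_sub_pow hm j

theorem mul_div_mul_sub_one_mul_log_le {t : ℝ} (ht : 1 < t) :
    m * t / (m * t - 1) * log m ≤ log (m * t - 1) - log (t - 1) := by
  have hmt : 0 < m * t - m := by nlinarith
  have hmt1 : 0 < m * t - 1 := by nlinarith
  have hlog : log m ≤ m - 1 := log_le_sub_one_of_pos (by linarith)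
  -- `log x ≥ 1 - 1/x` at `x = (mt - 1)/(mt - m)`
  have hgap : (m - 1) / (m * t - 1) ≤ log ((m * t - 1) / (m * t - m)) := by
    have := one_sub_inv_le_log_of_pos (div_pos hmt1 hmt)
    rw [inv_div] at this
    convert this using 1
    field_simp
    ring
  have hsplit : log (m * t - 1) - log (t - 1) = log m + log ((m * t - 1) / (m * t - m)) := by
    rw [log_div hmt1.ne' hmt.ne', show m * t - m = m * (t - 1) by ring,
      log_mul (by positivity) (by linarith)]
    ring
  calc m * t / (m * t - 1) * log m = log m + log m / (m * t - 1) := by field_simp; ring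
    _ ≤ log m + (m - 1) / (m * t - 1) := by gcongr
    _ ≤ _ := by rw [hsplit]; gcongr

theorem sum_Ico_pow_div_pow_sub_one_le {k n : ℕ} (hk : 1 ≤ k) (hkn : k ≤ n) :
    ∑ j ∈ Ico (k + 1) (n + 1), m ^ j / (m ^ j - 1)
      ≤ log ((m ^ n - 1) / (m ^ k - 1)) / log m := by
  have hlog : 0 < log m := log_pos hm
  have hk1 : 1 < m ^ k := one_lt_pow₀ hm (by omega)
  have hn1 : 1 < m ^ n := one_lt_pow₀ hm (by omega)
  rw [← sum_Ico_add', log_div (by linarith) (by linarith), sub_div]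
  refine sum_Ico_le_sub_of_le_sub (g := fun j ↦ log (m ^ j - 1) / log m) hkn fun j hj ↦ ?_
  have hj : 1 < m ^ j := one_lt_pow₀ hm (by have := (mem_Ico.1 hj).1; omega)
  rw [← sub_div, le_div_iff₀ hlog, pow_succ']
  exact mul_div_mul_sub_one_mul_log_le hm hj

end

/-- **Integral comparison bound, supercritical case, Peköz–Röllin.**
For any real `m > 1` and integer `n ≥ 1`,
`∑_{j=1}^n m^{2j}/(m^j − 1) ≤ m²/(m−1) + 2 m^{2n}/(mⁿ−1) + (mⁿ − m + log((mⁿ−1)/(m−1)))/log m`. -/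
theorem sum_bound_supercritical (m : ℝ) (hm : 1 < m) (n : ℕ) (hn : 1 ≤ n) :
    ∑ j ∈ Finset.Icc 1 n, m ^ (2 * j) / (m ^ j - 1)
      ≤ m ^ 2 / (m - 1) + 2 * m ^ (2 * n) / (m ^ n - 1)
        + (m ^ n - m + Real.log ((m ^ n - 1) / (m - 1))) / Real.log m := by
  have hn1 : 1 < m ^ n := one_lt_pow₀ hm (by omega)
  have hsplit : ∀ j ∈ Ico 1 (n + 1), m ^ (2 * j) / (m ^ j - 1) = m ^ j + m ^ j / (m ^ j - 1) := by
    intro j hj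
    have : m ^ j - 1 ≠ 0 := (sub_pos.2 (one_lt_pow₀ hm (by have := (mem_Ico.1 hj).1; omega))).ne'
    rw [pow_mul', sq]
    field_simp
    ring
  rw [← Ico_add_one_right_eq_Icc, sum_congr rfl hsplit, sum_add_distrib, sum_Ico_succ_top hn,
    sum_eq_sum_Ico_succ_bot (Nat.lt_add_one_of_le hn) (fun j ↦ m ^ j / (m ^ j - 1))]
  have hpow := sum_Ico_pow_le hm hn
  have hfrac := sum_Ico_pow_div_pow_sub_one_le hm le_rfl hn
  have hfirst : m ^ 1 / (m ^ 1 - 1) ≤ m ^ 2 / (m - 1) := by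
    rw [pow_one]; gcongr; nlinarith
  have hlast : m ^ n ≤ 2 * m ^ (2 * n) / (m ^ n - 1) := by
    rw [le_div_iff₀ (by linarith), pow_mul', sq]; nlinarith
  rw [pow_one] at hpow hfrac
  rw [add_div]
  linarith
end

section
/- Let X_1, X_2, ..., X_n be (possibly dependent) non-negative random variables with 0 < E Σ_{i=1}^n X_i < ∞, let λ = 1/E Σ_{i=1}^n X_i, and set W = λ Σ_{i=1}^n X_i. For each i and x, let W_i(x) be a random variable, independent of all else, with the law of λ Σ_{m=1}^{i−1} X_m conditioned on X_i = x. Let I be a random index, independent of all else, with P(I = i) = λ E X_i; let U be uniform on (0,1) independent of all else; and let X_i^s, independent of all else, have the size-biased distribution with respect to X_i. Then W^e = W_I(X_I^s) + λ U X_I^s has the equilibrium distribution with respect to W. -/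
/-!
Integrating out the independent uniform variable first: for fixed `w` and `c ≥ 0`,
`c · P(w + U c ≤ x) = min(x, w + c) - min(x, w)`. On `{I = i}` the size-bias density `λ X_i`
is exactly the factor `c = λ X_i`, so `P(Wᵉ ≤ x, I = i) = E[min(x, λ S_i) - min(x, λ S_{i-1})]`
with `S_i = X_1 + ⋯ + X_i`. Summing over `i` telescopes to `E[min(x, W)]`, which is
`∫_0^x P(W > y) dy` by the layer-cake formula.
-/

open MeasureTheory ProbabilityTheory Set

lemma ofReal_mul_volume_Ioo_add_mul_le (a c x : ℝ) (hc : 0 ≤ c) :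
    ENNReal.ofReal c * volume.restrict (Ioo 0 1) {u | a + u * c ≤ x}
      = ENNReal.ofReal (min x (a + c) - min x a) := by
  rcases hc.eq_or_lt with rfl | hc
  · simp
  have hset : {u | a + u * c ≤ x} = Iic ((x - a) / c) := by
    ext u
    simp only [mem_ofPred_eq, mem_Iic, le_div_iff₀ hc]
    constructor <;> intro h <;> linarith
  have hvol : volume.restrict (Ioo 0 1) (Iic ((x - a) / c))
      = ENNReal.ofReal (min 1 ((x - a) / c)) := by
    have hae : (Ioo 0 1 ∩ Iic ((x - a) / c) : Set ℝ)
        =ᵐ[volume] (Ioc 0 1 ∩ Iic ((x - a) / c) : Set ℝ) :=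
      Ioo_ae_eq_Ioc.inter (ae_eq_refl _)
    rw [Measure.restrict_apply measurableSet_Iic, inter_comm, measure_congr hae,
      Ioc_inter_Iic, Real.volume_Ioc, sub_zero]
  rw [hset, hvol, ← ENNReal.ofReal_mul hc.le, mul_min_of_nonneg _ _ hc.le, mul_one,
    mul_div_cancel₀ _ hc.ne']
  rcases le_total x a with hxa | hax
  · rw [ENNReal.ofReal_of_nonpos (by linarith [min_le_right c (x - a)]),
      ENNReal.ofReal_of_nonpos (by linarith [min_le_left x (a + c), min_eq_left hxa])]
  · congr 1
    rw [min_eq_right hax]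
    rcases le_total x (a + c) with h | h
    · simp [min_eq_left h, min_eq_right (by linarith : x - a ≤ c)]
    · simp [min_eq_right h, min_eq_left (by linarith : c ≤ x - a)]

lemma measurable_volume_Ioo_add_mul_le (c x : ℝ) :
    Measurable fun p : ℝ × ℝ => volume.restrict (Ioo 0 1) {u | p.1 + u * (c * p.2) ≤ x} :=
  measurable_measure_prodMk_right (s := {q : ℝ × ℝ × ℝ | q.2.1 + q.1 * (c * q.2.2) ≤ x})
    (measurableSet_le (by fun_prop) measurable_const)

lemma lintegral_volume_Ioo_add_mul_le_map_withDensity {Ω : Type*} [MeasurableSpace Ω]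
    {μ : Measure Ω} {V Y : Ω → ℝ} (hV : Measurable V) (hY : Measurable Y) (hY0 : ∀ ω, 0 ≤ Y ω)
    {c : ℝ} (hc : 0 ≤ c) (x : ℝ) :
    ∫⁻ p, volume.restrict (Ioo 0 1) {u | p.1 + u * (c * p.2) ≤ x}
        ∂(Measure.map (fun ω => (V ω, Y ω)) (μ.withDensity fun ω => ENNReal.ofReal (c * Y ω)))
      = ∫⁻ ω, ENNReal.ofReal (min x (V ω + c * Y ω) - min x (V ω)) ∂μ := by
  have hφ := measurable_volume_Ioo_add_mul_le c x
  refine (lintegral_map hφ (hV.prodMk hY)).trans <| (lintegral_withDensity_eq_lintegral_mul _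
    (hY.const_mul c).ennreal_ofReal (hφ.comp (hV.prodMk hY))).trans ?_
  exact lintegral_congr fun ω => ofReal_mul_volume_Ioo_add_mul_le _ _ x (mul_nonneg hc (hY0 ω))

lemma measure_preimage_prodMk_eq_lintegral_of_indepFun {Ω β γ : Type*} [MeasurableSpace Ω]
    [MeasurableSpace β] [MeasurableSpace γ] {μ : Measure Ω} [IsFiniteMeasure μ]
    {U : Ω → β} {T : Ω → γ} (hU : Measurable U) (hT : Measurable T) (hUT : IndepFun U T μ)
    {s : Set (β × γ)} (hs : MeasurableSet s) :
    μ ((fun ω => (U ω, T ω)) ⁻¹' s) = ∫⁻ ω, μ.map U {u | (u, T ω) ∈ s} ∂μ := by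
  rw [← Measure.map_apply (hU.prodMk hT) hs,
    (indepFun_iff_map_prod_eq_prod_map_map hU.aemeasurable hT.aemeasurable).1 hUT,
    Measure.prod_apply_symm hs, lintegral_map (measurable_measure_prodMk_right hs) hT]
  rfl

lemma measure_add_mul_le_eq_lintegral_of_indepFun_uniform {Ω : Type*} [MeasurableSpace Ω]
    {μ : Measure Ω} [IsFiniteMeasure μ] {U V Y : Ω → ℝ} (hU : Measurable U) (hV : Measurable V)
    (hY : Measurable Y) (hUVY : IndepFun U (fun ω => (V ω, Y ω)) μ)
    (hUunif : μ.map U = volume.restrict (Ioo 0 1)) (c x : ℝ) :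
    μ {ω | V ω + c * U ω * Y ω ≤ x}
      = ∫⁻ ω, volume.restrict (Ioo 0 1) {u | V ω + u * (c * Y ω) ≤ x} ∂μ := by
  have hevent : {ω | V ω + c * U ω * Y ω ≤ x}
      = (fun ω => (U ω, (V ω, Y ω))) ⁻¹' {p | p.2.1 + p.1 * (c * p.2.2) ≤ x} := by
    ext ω
    simp only [mem_ofPred_eq, mem_preimage, mul_assoc, mul_left_comm c]
  rw [hevent, measure_preimage_prodMk_eq_lintegral_of_indepFun hU (hV.prodMk hY) hUVY
    (measurableSet_le (by fun_prop) measurable_const), hUunif]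
  rfl

lemma lintegral_eq_sum_setLIntegral_fiber {Ω ι : Type*} [MeasurableSpace Ω] [MeasurableSpace ι]
    [MeasurableSingletonClass ι] {μ : Measure Ω} {I : Ω → ι} (hI : Measurable I) {s : Finset ι}
    (hIs : ∀ ω, I ω ∈ s) (f : Ω → ENNReal) :
    ∫⁻ ω, f ω ∂μ = ∑ i ∈ s, ∫⁻ ω in {ω | I ω = i}, f ω ∂μ := by
  have hcover : ⋃ i ∈ s, {ω | I ω = i} = univ :=
    eq_univ_of_forall fun ω => mem_biUnion (hIs ω) rfl
  rw [← lintegral_biUnion_finset (t := fun i => {ω | I ω = i}) (pairwiseDisjoint_fiber I s)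
    (fun i _ => hI (measurableSet_singleton i)), hcover, Measure.restrict_univ]

lemma sum_Icc_ofReal_sub_of_monotone {g : ℕ → ℝ} (hg : Monotone g) (n : ℕ) :
    ∑ i ∈ Finset.Icc 1 n, ENNReal.ofReal (g (i + 1) - g i)
      = ENNReal.ofReal (g (n + 1) - g 1) := by
  rw [← ENNReal.ofReal_sum_of_nonneg fun i _ => sub_nonneg.2 (hg i.le_succ),
    ← Finset.Ico_add_one_right_eq_Icc, Finset.sum_Ico_sub (f := g) (by omega)]

lemma sum_Icc_ofReal_min_sub_eq_ofReal_min_mul_sum {a : ℕ → ℝ} (ha : ∀ m, 0 ≤ a m) {c : ℝ}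
    (hc : 0 ≤ c) {x : ℝ} (hx : 0 ≤ x) (n : ℕ) :
    ∑ i ∈ Finset.Icc 1 n, ENNReal.ofReal (min x (c * ∑ m ∈ Finset.Ico 1 i, a m + c * a i)
        - min x (c * ∑ m ∈ Finset.Ico 1 i, a m))
      = ENNReal.ofReal (min x (c * ∑ m ∈ Finset.Icc 1 n, a m)) := by
  set g : ℕ → ℝ := fun i => min x (c * ∑ m ∈ Finset.Ico 1 i, a m)
  have hg : Monotone g := fun i j hij => min_le_min le_rfl <| mul_le_mul_of_nonneg_left
    (Finset.sum_le_sum_of_subset_of_nonneg (Finset.Ico_subset_Ico le_rfl hij)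
      fun m _ _ => ha m) hc
  have hsucc : ∀ i ∈ Finset.Icc 1 n,
      min x (c * ∑ m ∈ Finset.Ico 1 i, a m + c * a i) = g (i + 1) :=
    fun i hi => by simp only [g, Finset.sum_Ico_succ_top (Finset.mem_Icc.1 hi).1, mul_add]
  rw [Finset.sum_congr rfl fun i hi => by rw [hsucc i hi], sum_Icc_ofReal_sub_of_monotone hg]
  simp [g, min_eq_right hx, Finset.Ico_add_one_right_eq_Icc]

lemma intervalIntegral_measure_lt_eq_lintegral_min {Ω : Type*} [MeasurableSpace Ω]
    {μ : Measure Ω} [IsFiniteMeasure μ] {f : Ω → ℝ} (hf : Measurable f) (hf0 : ∀ ω, 0 ≤ f ω)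
    {x : ℝ} (hx : 0 ≤ x) :
    ∫ y in (0:ℝ)..x, (μ {ω | y < f ω}).toReal
      = (∫⁻ ω, ENNReal.ofReal (min x (f ω)) ∂μ).toReal := by
  have hlt : ∀ t, μ {ω | t < min x (f ω)} = (Iio x).indicator (fun t => μ {ω | t < f ω}) t := by
    intro t
    by_cases h : t < x <;> simp [h]
  have hanti : Antitone fun t => μ {ω | t < f ω} := fun s t hst =>
    measure_mono fun ω (hω : t < f ω) => hst.trans_lt hω
  rw [lintegral_eq_lintegral_meas_lt μ (ae_of_all _ fun ω => le_min hx (hf0 ω))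
      (measurable_const.min hf).aemeasurable, funext hlt,
    setLIntegral_indicator measurableSet_Iio, inter_comm, Ioi_inter_Iio,
    intervalIntegral.integral_of_le hx, integral_Ioc_eq_integral_Ioo,
    integral_toReal hanti.measurable.aemeasurable (ae_of_all _ fun t => measure_lt_top μ _)]

theorem equilibrium_coupling_dependent_sums_general
    {Ω Ω' : Type*} [MeasurableSpace Ω] [MeasurableSpace Ω']
    (μ : Measure Ω) (μ' : Measure Ω')
    [IsProbabilityMeasure μ] [IsProbabilityMeasure μ']
    (n : ℕ) (X : ℕ → Ω → ℝ) (hXmeas : ∀ i, Measurable (X i))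
    (hXnn : ∀ i ω, 0 ≤ X i ω)
    (lam : ℝ) (hlam : lam = (∫ ω, ∑ i ∈ Finset.Icc 1 n, X i ω ∂μ)⁻¹)
    (I : Ω' → ℕ) (Wi Xs U : Ω' → ℝ)
    (hImeas : Measurable I) (hWimeas : Measurable Wi)
    (hXsmeas : Measurable Xs) (hUmeas : Measurable U)
    (hIrange : ∀ ω', I ω' ∈ Finset.Icc 1 n)
    (hjoint : ∀ i ∈ Finset.Icc 1 n,
      Measure.map (fun ω' => (Wi ω', Xs ω')) (μ'.restrict {ω' | I ω' = i})
        = Measure.map (fun ω => (lam * ∑ m ∈ Finset.Ico 1 i, X m ω, X i ω))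
            (μ.withDensity fun ω => ENNReal.ofReal (lam * X i ω)))
    (hU : Measure.map U μ' = volume.restrict (Set.Ioo (0:ℝ) 1))
    (hUindep : IndepFun U (fun ω' => (I ω', Wi ω', Xs ω')) μ') :
    ∀ x : ℝ, 0 ≤ x →
      (μ' {ω' | Wi ω' + lam * U ω' * Xs ω' ≤ x}).toReal
        = ∫ y in (0:ℝ)..x,
            (μ {ω | y < lam * ∑ i ∈ Finset.Icc 1 n, X i ω}).toReal := by
  intro x hx
  have hlam_nonneg : 0 ≤ lam :=
    hlam ▸ inv_nonneg.2 (integral_nonneg fun ω => Finset.sum_nonneg fun i _ => hXnn i ω)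
  rw [measure_add_mul_le_eq_lintegral_of_indepFun_uniform hUmeas hWimeas hXsmeas
      (hUindep.comp measurable_id measurable_snd) hU,
    lintegral_eq_sum_setLIntegral_fiber hImeas hIrange]
  calc (∑ i ∈ Finset.Icc 1 n, ∫⁻ ω' in {ω' | I ω' = i},
          volume.restrict (Ioo 0 1) {u | Wi ω' + u * (lam * Xs ω') ≤ x} ∂μ').toReal
      = (∑ i ∈ Finset.Icc 1 n, ∫⁻ ω, ENNReal.ofReal
          (min x (lam * ∑ m ∈ Finset.Ico 1 i, X m ω + lam * X i ω)
            - min x (lam * ∑ m ∈ Finset.Ico 1 i, X m ω)) ∂μ).toReal := by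
        refine congrArg _ (Finset.sum_congr rfl fun i hi => ?_)
        refine (lintegral_map (measurable_volume_Ioo_add_mul_le lam x)
          (hWimeas.prodMk hXsmeas)).symm.trans ?_
        rw [hjoint i hi]
        exact lintegral_volume_Ioo_add_mul_le_map_withDensity (by fun_prop) (hXmeas i) (hXnn i)
          hlam_nonneg x
    _ = (∫⁻ ω, ENNReal.ofReal (min x (lam * ∑ i ∈ Finset.Icc 1 n, X i ω)) ∂μ).toReal := by
        rw [← lintegral_finsetSum _ fun i _ => by fun_prop]
        exact congrArg _ (lintegral_congr fun ω =>
          sum_Icc_ofReal_min_sub_eq_ofReal_min_mul_sum (hXnn · ω) hlam_nonneg hx n)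
    _ = _ := (intervalIntegral_measure_lt_eq_lintegral_min (by fun_prop)
        (fun ω => mul_nonneg hlam_nonneg (Finset.sum_nonneg fun m _ => hXnn m ω)) hx).symm

/-- **Theorem 4.1, Peköz–Röllin (equilibrium coupling for dependent sums).**
Let `X 1, …, X n ≥ 0` (possibly dependent) with `0 < E ∑ X i < ∞`, let
`λ = 1/E ∑ X i` and `W = λ ∑_{i=1}^n X i`.  On an auxiliary space let `I` be a random
index with `P(I = i) = λ E X i`, and let `(Wi, Xs)` be such that, on the event `{I = i}`,
the pair `(Wi, Xs)` is distributed as `(λ ∑_{m=1}^{i−1} X m, X i)` under the `X i`-size-biased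
measure (equivalently: `Xs = X_I^s` is size-biased from `X_I` and `Wi = W_I(X_I^s)` has the
conditional law of `λ ∑_{m<I} X m` given `X_I = Xs`).  Let `U` be uniform on `(0,1)`,
independent of `(I, Wi, Xs)`.  Then `Wᵉ = Wi + λ U Xs` has the equilibrium distribution
w.r.t. `W`, i.e. (since `E W = 1`) `P(Wᵉ ≤ x) = ∫_0^x P(W > y) dy` for all `x ≥ 0`. -/
theorem equilibrium_coupling_dependent_sums
    {Ω Ω' : Type*} [MeasurableSpace Ω] [MeasurableSpace Ω']
    (μ : Measure Ω) (μ' : Measure Ω')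
    [IsProbabilityMeasure μ] [IsProbabilityMeasure μ']
    (n : ℕ) (X : ℕ → Ω → ℝ) (hXmeas : ∀ i, Measurable (X i))
    (hXnn : ∀ i ω, 0 ≤ X i ω) (hXint : ∀ i, Integrable (X i) μ)
    (hpos : 0 < ∫ ω, ∑ i ∈ Finset.Icc 1 n, X i ω ∂μ)
    (lam : ℝ) (hlam : lam = (∫ ω, ∑ i ∈ Finset.Icc 1 n, X i ω ∂μ)⁻¹)
    (I : Ω' → ℕ) (Wi Xs U : Ω' → ℝ)
    (hImeas : Measurable I) (hWimeas : Measurable Wi)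
    (hXsmeas : Measurable Xs) (hUmeas : Measurable U)
    (hIrange : ∀ ω', I ω' ∈ Finset.Icc 1 n)
    (hI : ∀ i ∈ Finset.Icc 1 n,
      (μ' {ω' | I ω' = i}).toReal = lam * ∫ ω, X i ω ∂μ)
    (hjoint : ∀ i ∈ Finset.Icc 1 n,
      Measure.map (fun ω' => (Wi ω', Xs ω')) (μ'.restrict {ω' | I ω' = i})
        = Measure.map (fun ω => (lam * ∑ m ∈ Finset.Ico 1 i, X m ω, X i ω))
            (μ.withDensity fun ω => ENNReal.ofReal (lam * X i ω)))
    (hU : Measure.map U μ' = volume.restrict (Set.Ioo (0:ℝ) 1))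
    (hUindep : IndepFun U (fun ω' => (I ω', Wi ω', Xs ω')) μ') :
    ∀ x : ℝ, 0 ≤ x →
      (μ' {ω' | Wi ω' + lam * U ω' * Xs ω' ≤ x}).toReal
        = ∫ y in (0:ℝ)..x,
            (μ {ω | y < lam * ∑ i ∈ Finset.Icc 1 n, X i ω}).toReal :=
  equilibrium_coupling_dependent_sums_general μ μ' n X hXmeas hXnn lam hlam I Wi Xs U hImeas hWimeas
    hXsmeas hUmeas hIrange hjoint hU hUindep
end

section
/- Let X_1, X_2, ..., X_n be (possibly dependent) non-negative random variables with 0 < E Σ_{i=1}^n X_i < ∞, let λ = 1/E Σ_{i=1}^n X_i, and set W = λ Σ_{i=1}^n X_i. For each i and x, let W_i(x) be a random variable, independent of all else, with the law of λ Σ_{m=i+1}^{n} X_m conditioned on X_i = x. Let I be a random index, independent of all else, with P(I = i) = λ E X_i; let U be uniform on (0,1) independent of all else; and let X_i^s, independent of all else, have the size-biased distribution with respect to X_i. Then W^e = W_I(X_I^s) + λ U X_I^s has the equilibrium distribution with respect to W. -/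
open MeasureTheory ProbabilityTheory

/-!
Write `T j = λ ∑_{m ≥ j} X m`, so `W = T 1`, `T (n + 1) = 0` and `T i = T (i + 1) + λ X i`.
On `{I = i}` the pair `(Wi, Xs)` has the law of `(T (i + 1), X i)` under the measure with
density `λ X i`. Integrating out the independent uniform `U` first, for fixed `(a, s)` the
density `λ s` cancels the scale of `u ↦ a + λ u s`:
`λ s · P(a + λ U s ≤ x) = min x (a + λ s) - min x a`. Hence
`P(Wᵉ ≤ x, I = i) = E[min x (T i) - min x (T (i + 1))]`, the sum over `i` telescopes to
`E[min x W]`, and the layer-cake formula gives `E[min x W] = ∫₀ˣ P(W > y) dy`.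
-/

section

variable {Ω Ω' : Type*} [MeasurableSpace Ω] [MeasurableSpace Ω']
  {μ : Measure Ω} {μ' : Measure Ω'}

open Set in
theorem ofReal_mul_volume_Ioo_setOf_add_mul_le (a b x : ℝ) (hb : 0 ≤ b) :
    ENNReal.ofReal b * volume.restrict (Ioo 0 1) {u | a + b * u ≤ x}
      = ENNReal.ofReal (min x (a + b) - min x a) := by
  rcases hb.eq_or_lt with rfl | hb
  · simp
  have hset : {u | a + b * u ≤ x} = Iic ((x - a) / b) := by
    ext u
    change a + b * u ≤ x ↔ u ≤ (x - a) / b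
    rw [le_div_iff₀ hb, mul_comm]
    constructor <;> intro h <;> linarith
  have hvol : volume.restrict (Ioo 0 1) (Iic ((x - a) / b))
      = ENNReal.ofReal (min 1 ((x - a) / b)) := by
    rw [Measure.restrict_congr_set Ioo_ae_eq_Ioc, Measure.restrict_apply measurableSet_Iic,
      inter_comm, Ioc_inter_Iic, Real.volume_Ioc, sub_zero]
  rw [hset, hvol, ← ENNReal.ofReal_mul hb.le, mul_min_of_nonneg _ _ hb.le, mul_one,
    mul_div_cancel₀ _ hb.ne']
  rcases le_total a x with hax | hxa
  · rw [min_eq_right hax, ← min_sub_sub_right, add_sub_cancel_left, min_comm]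
  · rw [min_eq_left (show x ≤ a + b by linarith), min_eq_left hxa, sub_self,
      ENNReal.ofReal_zero, ENNReal.ofReal_eq_zero]
    exact min_le_of_right_le (by linarith)

theorem ProbabilityTheory.IndepFun.measure_preimage_eq_lintegral
    {α β : Type*} [MeasurableSpace α] [MeasurableSpace β] [IsFiniteMeasure μ]
    {U : Ω → α} {V : Ω → β}
    (h : U ⟂ᵢ[μ] V) (hU : Measurable U) (hV : Measurable V)
    {C : Set (α × β)} (hC : MeasurableSet C) :
    μ ((fun ω => (U ω, V ω)) ⁻¹' C) = ∫⁻ ω, μ.map U {u | (u, V ω) ∈ C} ∂μ := by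
  rw [← Measure.map_apply (hU.prodMk hV) hC,
    (indepFun_iff_map_prod_eq_prod_map_map hU.aemeasurable hV.aemeasurable).mp h,
    Measure.prod_apply_symm hC, lintegral_map (measurable_measure_prodMk_right hC) hV]
  rfl

theorem integral_min_eq_intervalIntegral_measure_lt [IsFiniteMeasure μ] {f : Ω → ℝ}
    (hf : AEMeasurable f μ) (hf0 : 0 ≤ᵐ[μ] f) {x : ℝ} (hx : 0 ≤ x) :
    ∫ ω, min x (f ω) ∂μ = ∫ y in 0..x, (μ {ω | y < f ω}).toReal := by
  have hint : Integrable (fun ω => min x (f ω)) μ := by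
    refine Integrable.mono' (integrable_const x) (aemeasurable_const.min hf).aestronglyMeasurable ?_
    filter_upwards [hf0] with ω hω
    rw [Real.norm_of_nonneg (le_min hx hω)]
    exact min_le_left _ _
  have hcut : ∀ y ∈ Set.Ioi (0 : ℝ), μ.real {ω | y < min x (f ω)}
      = Set.indicator (Set.Ioo 0 x) (fun y => (μ {ω | y < f ω}).toReal) y := by
    intro y hy
    by_cases hyx : y < x <;> simp [Set.indicator, Set.mem_Ioi.mp hy, hyx, measureReal_def]
  rw [hint.integral_eq_integral_meas_lt (hf0.mono fun ω hω => le_min hx hω),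
    setIntegral_congr_fun measurableSet_Ioi hcut, setIntegral_indicator measurableSet_Ioo,
    Set.inter_eq_self_of_subset_right Set.Ioo_subset_Ioi_self,
    intervalIntegral.integral_of_le hx, integral_Ioc_eq_integral_Ioo]

theorem sum_lintegral_ofReal_sub_succ {g : ℕ → Ω → ℝ} (hg : ∀ i, Measurable (g i))
    (hanti : ∀ ω, Antitone (g · ω)) {m n : ℕ} (hmn : m ≤ n) :
    ∑ i ∈ Finset.Ico m n, ∫⁻ ω, ENNReal.ofReal (g i ω - g (i + 1) ω) ∂μ
      = ∫⁻ ω, ENNReal.ofReal (g m ω - g n ω) ∂μ := by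
  rw [← lintegral_finsetSum (f := fun i ω => ENNReal.ofReal (g i ω - g (i + 1) ω)) _
    fun i _ => ((hg i).sub (hg (i + 1))).ennreal_ofReal]
  refine lintegral_congr fun ω => ?_
  rw [← ENNReal.ofReal_sum_of_nonneg fun i _ => sub_nonneg.2 (hanti ω i.le_succ)]
  congr 1
  rw [← neg_sub, ← Finset.sum_Ico_sub (fun i => g i ω) hmn, ← Finset.sum_neg_distrib]
  simp

theorem measure_fiber_inter_add_mul_uniform_le {ι : Type*} [MeasurableSpace ι]
    [MeasurableSingletonClass ι] [IsFiniteMeasure μ'] {I : Ω' → ι} {W S' U : Ω' → ℝ}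
    {A S : Ω → ℝ} {c : ℝ} (hc : 0 ≤ c) (hS : ∀ ω, 0 ≤ S ω)
    (hI : Measurable I) (hW : Measurable W) (hS' : Measurable S') (hU : Measurable U)
    (hA : Measurable A) (hSm : Measurable S) (i : ι)
    (hlaw : Measure.map (fun ω' => (W ω', S' ω')) (μ'.restrict {ω' | I ω' = i})
      = Measure.map (fun ω => (A ω, S ω)) (μ.withDensity fun ω => ENNReal.ofReal (c * S ω)))
    (hUnif : Measure.map U μ' = volume.restrict (Set.Ioo (0:ℝ) 1))
    (hindep : U ⟂ᵢ[μ'] (fun ω' => (I ω', W ω', S' ω'))) (x : ℝ) :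
    μ' ({ω' | I ω' = i} ∩ {ω' | W ω' + c * U ω' * S' ω' ≤ x})
      = ∫⁻ ω, ENNReal.ofReal (min x (A ω + c * S ω) - min x (A ω)) ∂μ := by
  set G : ℝ × ℝ → ENNReal := fun q =>
    volume.restrict (Set.Ioo 0 1) {u | q.1 + c * q.2 * u ≤ x}
  have hG : Measurable G :=
    measurable_measure_prodMk_left (s := {p : (ℝ × ℝ) × ℝ | p.1.1 + c * p.1.2 * p.2 ≤ x})
      (measurableSet_le (by fun_prop) measurable_const)
  have hIi : MeasurableSet {ω' | I ω' = i} := hI (measurableSet_singleton i)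
  calc μ' ({ω' | I ω' = i} ∩ {ω' | W ω' + c * U ω' * S' ω' ≤ x})
      = ∫⁻ ω', volume.restrict (Set.Ioo 0 1)
          {u | I ω' = i ∧ W ω' + c * u * S' ω' ≤ x} ∂μ' := by
        have hC : MeasurableSet
            {p : ℝ × ι × ℝ × ℝ | p.2.1 = i ∧ p.2.2.1 + c * p.1 * p.2.2.2 ≤ x} :=
          (measurable_fst.comp measurable_snd (measurableSet_singleton i)).inter
            (measurableSet_le (f := fun p : ℝ × ι × ℝ × ℝ => p.2.2.1 + c * p.1 * p.2.2.2)
              (by fun_prop) measurable_const)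
        rw [← hUnif]
        exact hindep.measure_preimage_eq_lintegral hU (hI.prodMk (hW.prodMk hS')) hC
    _ = ∫⁻ ω' in {ω' | I ω' = i}, G (W ω', S' ω') ∂μ' := by
        rw [← lintegral_indicator hIi]
        refine lintegral_congr fun ω' => ?_
        by_cases h : I ω' = i <;> simp [G, h, mul_right_comm c]
    _ = ∫⁻ ω, G (A ω, S ω) ∂(μ.withDensity fun ω => ENNReal.ofReal (c * S ω)) := by
        rw [← lintegral_map hG (hW.prodMk hS'), hlaw, lintegral_map hG (hA.prodMk hSm)]
    _ = ∫⁻ ω, ENNReal.ofReal (min x (A ω + c * S ω) - min x (A ω)) ∂μ := by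
        rw [lintegral_withDensity_eq_lintegral_mul _ (by fun_prop)
          (g := fun ω => G (A ω, S ω)) (hG.comp (hA.prodMk hSm))]
        exact lintegral_congr fun ω =>
          ofReal_mul_volume_Ioo_setOf_add_mul_le _ _ x (mul_nonneg hc (hS ω))

theorem measure_eq_sum_measure_fiber_inter {ι : Type*} [MeasurableSpace ι]
    [MeasurableSingletonClass ι] {I : Ω → ι} (hI : Measurable I) {s : Finset ι}
    (hs : ∀ ω, I ω ∈ s) (B : Set Ω) :
    μ B = ∑ i ∈ s, μ ({ω | I ω = i} ∩ B) := by
  have hcover : I ⁻¹' ↑s = Set.univ := Set.eq_univ_of_forall hs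
  rw [← Measure.restrict_apply_univ, ← hcover,
    ← sum_measure_preimage_singleton _ fun i _ => hI (measurableSet_singleton i)]
  exact Finset.sum_congr rfl fun i _ => Measure.restrict_apply (hI (measurableSet_singleton i))

end

theorem equilibrium_coupling_dependent_sums_rev_general
    {Ω Ω' : Type*} [MeasurableSpace Ω] [MeasurableSpace Ω']
    (μ : Measure Ω) (μ' : Measure Ω')
    [IsProbabilityMeasure μ] [IsProbabilityMeasure μ']
    (n : ℕ) (X : ℕ → Ω → ℝ) (hXmeas : ∀ i, Measurable (X i))
    (hXnn : ∀ i ω, 0 ≤ X i ω)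
    (lam : ℝ) (hlam : lam = (∫ ω, ∑ i ∈ Finset.Icc 1 n, X i ω ∂μ)⁻¹)
    (I : Ω' → ℕ) (Wi Xs U : Ω' → ℝ)
    (hImeas : Measurable I) (hWimeas : Measurable Wi)
    (hXsmeas : Measurable Xs) (hUmeas : Measurable U)
    (hIrange : ∀ ω', I ω' ∈ Finset.Icc 1 n)
    (hjoint : ∀ i ∈ Finset.Icc 1 n,
      Measure.map (fun ω' => (Wi ω', Xs ω')) (μ'.restrict {ω' | I ω' = i})
        = Measure.map (fun ω => (lam * ∑ m ∈ Finset.Ioc i n, X m ω, X i ω))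
            (μ.withDensity fun ω => ENNReal.ofReal (lam * X i ω)))
    (hU : Measure.map U μ' = volume.restrict (Set.Ioo (0:ℝ) 1))
    (hUindep : IndepFun U (fun ω' => (I ω', Wi ω', Xs ω')) μ') :
    ∀ x : ℝ, 0 ≤ x →
      (μ' {ω' | Wi ω' + lam * U ω' * Xs ω' ≤ x}).toReal
        = ∫ y in (0:ℝ)..x,
            (μ {ω | y < lam * ∑ i ∈ Finset.Icc 1 n, X i ω}).toReal := by
  intro x hx
  have hlam0 : 0 ≤ lam :=
    hlam ▸ inv_nonneg.2 (integral_nonneg fun ω => Finset.sum_nonneg fun i _ => hXnn i ω)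
  have hsum_meas : ∀ s : Finset ℕ, Measurable fun ω => lam * ∑ m ∈ s, X m ω :=
    fun s => (Finset.measurable_sum s fun m _ => hXmeas m).const_mul lam
  have hsum_nn : ∀ (s : Finset ℕ) ω, 0 ≤ lam * ∑ m ∈ s, X m ω :=
    fun s ω => mul_nonneg hlam0 (Finset.sum_nonneg fun m _ => hXnn m ω)
  set g : ℕ → Ω → ℝ := fun j ω => min x (lam * ∑ m ∈ Finset.Icc j n, X m ω) with hg
  have hg_anti : ∀ ω, Antitone (g · ω) := fun ω j k hjk =>
    min_le_min_left x <| mul_le_mul_of_nonneg_left (Finset.sum_le_sum_of_subset_of_nonneg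
      (Finset.Icc_subset_Icc_left hjk) fun m _ _ => hXnn m ω) hlam0
  have hslice : ∀ i ∈ Finset.Icc 1 n,
      μ' ({ω' | I ω' = i} ∩ {ω' | Wi ω' + lam * U ω' * Xs ω' ≤ x})
        = ∫⁻ ω, ENNReal.ofReal (g i ω - g (i + 1) ω) ∂μ := by
    intro i hi
    rw [measure_fiber_inter_add_mul_uniform_le hlam0 (hXnn i) hImeas hWimeas hXsmeas hUmeas
      (hsum_meas _) (hXmeas i) i (hjoint i hi) hU hUindep x]
    simp only [hg, ← mul_add, Finset.sum_Ioc_add_eq_sum_Icc (Finset.mem_Icc.1 hi).2,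
      Finset.Icc_add_one_left_eq_Ioc]
  have hmeasure : μ' {ω' | Wi ω' + lam * U ω' * Xs ω' ≤ x}
      = ∫⁻ ω, ENNReal.ofReal (g 1 ω) ∂μ := by
    rw [measure_eq_sum_measure_fiber_inter hImeas hIrange, Finset.sum_congr rfl hslice,
      ← Finset.Ico_add_one_right_eq_Icc, sum_lintegral_ofReal_sub_succ
        (fun j => measurable_const.min (hsum_meas _)) hg_anti (Nat.le_add_left 1 n)]
    simp [hg, min_eq_right hx]
  rw [hmeasure, ← integral_eq_lintegral_of_nonneg_ae
      (Filter.Eventually.of_forall fun ω => le_min hx (hsum_nn _ ω))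
      (measurable_const.min (hsum_meas _)).aestronglyMeasurable,
    integral_min_eq_intervalIntegral_measure_lt (hsum_meas _).aemeasurable
      (Filter.Eventually.of_forall (hsum_nn _)) hx]

/-- **Remark 4.2, Peköz–Röllin (equilibrium coupling for dependent sums, right version).**
Let `X 1, …, X n ≥ 0` (possibly dependent) with `0 < E ∑ X i < ∞`, let
`λ = 1/E ∑ X i` and `W = λ ∑_{i=1}^n X i`.  On an auxiliary space let `I` be a random
index with `P(I = i) = λ E X i`, and let `(Wi, Xs)` be such that, on the event `{I = i}`,
the pair `(Wi, Xs)` is distributed as `(λ ∑_{m=i+1}^{n} X m, X i)` under the `X i`-size-biased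
measure (equivalently: `Xs = X_I^s` is size-biased from `X_I` and `Wi = W_I(X_I^s)` has the
conditional law of `λ ∑_{m>I} X m` given `X_I = Xs`).  Let `U` be uniform on `(0,1)`,
independent of `(I, Wi, Xs)`.  Then `Wᵉ = Wi + λ U Xs` has the equilibrium distribution
w.r.t. `W`, i.e. (since `E W = 1`) `P(Wᵉ ≤ x) = ∫_0^x P(W > y) dy` for all `x ≥ 0`. -/
theorem equilibrium_coupling_dependent_sums_rev
    {Ω Ω' : Type*} [MeasurableSpace Ω] [MeasurableSpace Ω']
    (μ : Measure Ω) (μ' : Measure Ω')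
    [IsProbabilityMeasure μ] [IsProbabilityMeasure μ']
    (n : ℕ) (X : ℕ → Ω → ℝ) (hXmeas : ∀ i, Measurable (X i))
    (hXnn : ∀ i ω, 0 ≤ X i ω) (hXint : ∀ i, Integrable (X i) μ)
    (hpos : 0 < ∫ ω, ∑ i ∈ Finset.Icc 1 n, X i ω ∂μ)
    (lam : ℝ) (hlam : lam = (∫ ω, ∑ i ∈ Finset.Icc 1 n, X i ω ∂μ)⁻¹)
    (I : Ω' → ℕ) (Wi Xs U : Ω' → ℝ)
    (hImeas : Measurable I) (hWimeas : Measurable Wi)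
    (hXsmeas : Measurable Xs) (hUmeas : Measurable U)
    (hIrange : ∀ ω', I ω' ∈ Finset.Icc 1 n)
    (hI : ∀ i ∈ Finset.Icc 1 n,
      (μ' {ω' | I ω' = i}).toReal = lam * ∫ ω, X i ω ∂μ)
    (hjoint : ∀ i ∈ Finset.Icc 1 n,
      Measure.map (fun ω' => (Wi ω', Xs ω')) (μ'.restrict {ω' | I ω' = i})
        = Measure.map (fun ω => (lam * ∑ m ∈ Finset.Ioc i n, X m ω, X i ω))
            (μ.withDensity fun ω => ENNReal.ofReal (lam * X i ω)))
    (hU : Measure.map U μ' = volume.restrict (Set.Ioo (0:ℝ) 1))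
    (hUindep : IndepFun U (fun ω' => (I ω', Wi ω', Xs ω')) μ') :
    ∀ x : ℝ, 0 ≤ x →
      (μ' {ω' | Wi ω' + lam * U ω' * Xs ω' ≤ x}).toReal
        = ∫ y in (0:ℝ)..x,
            (μ {ω | y < lam * ∑ i ∈ Finset.Icc 1 n, X i ω}).toReal :=
  equilibrium_coupling_dependent_sums_rev_general μ μ' n X hXmeas hXnn lam hlam I Wi Xs U hImeas
    hWimeas hXsmeas hUmeas hIrange hjoint hU hUindep
end
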